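/- arXiv:1912.07546 — 3 statements merged into one kernel-verified Lean document; each statement's English description precedes it below -/
import Mathlib

section
/- Let K, R ∈ [0,1]^{N×N} agree on all entries involving outliers except that R_{ij} = γ there, let X⁰ ∈ [0,1]^{N×N} be supported on the inlier block, and let X̂ ∈ [0,1]^{N×N} maximize ⟨K − γE, X⟩ over [0,1]^{N×N}. Then ⟨R − γE, X⁰ − X̂⟩ ≤ 2‖K_I − R_I‖₁, where K_I, R_I denote restrictions to the inlier index set. -/
/-!
Off the inlier block `R = γ`, so only inlier entries contribute to `⟨R - γE, X⁰ - X̂⟩`. There split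
`R - γ = (R - K) + (K - γ)`. Since `|X⁰ - X̂| ≤ 1` entrywise, the first part contributes at most
`‖K_I - R_I‖₁`. The second part is `≤ 0`: overwriting `X̂` by `X⁰` on the inlier block gives another
point of the box `[0,1]^{N×N}`, which cannot beat the maximiser `X̂`.
-/

open Finset Matrix

section Box

variable {α : Type*} [Fintype α]

lemma dotProduct_eq_sum_of_mul_eq_zero {s : Finset α} {u v : α → ℝ}
    (h : ∀ a ∉ s, u a * v a = 0) : u ⬝ᵥ v = ∑ a ∈ s, u a * v a :=
  (sum_subset (subset_univ s) fun a _ ha => h a ha).symm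

lemma sum_mul_sub_nonpos_of_isMaxOn [DecidableEq α] (s : Finset α) {c f g l u : α → ℝ}
    (hmax : IsMaxOn (c ⬝ᵥ ·) (Set.Icc l u) g) (hf : f ∈ Set.Icc l u) (hg : g ∈ Set.Icc l u) :
    ∑ a ∈ s, c a * (f a - g a) ≤ 0 := by
  have hpatch : c ⬝ᵥ (s.piecewise f g - g) = ∑ a ∈ s, c a * (f a - g a) := by
    rw [dotProduct_eq_sum_of_mul_eq_zero (s := s) fun a ha => by simp [ha]]
    exact sum_congr rfl fun a ha => by simp [ha]
  rw [← hpatch, dotProduct_sub, sub_nonpos]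
  exact isMaxOn_iff.1 hmax _ (s.piecewise_mem_Icc_of_mem_of_mem hf hg)

lemma mul_sub_le_abs_sub {k r x y : ℝ} (hx : x ∈ Set.Icc (0 : ℝ) 1) (hy : y ∈ Set.Icc (0 : ℝ) 1) :
    (r - k) * (x - y) ≤ |k - r| :=
  calc (r - k) * (x - y) ≤ |r - k| * |x - y| := abs_mul (r - k) (x - y) ▸ le_abs_self _
    _ ≤ |k - r| * 1 := by
      rw [abs_sub_comm r k]
      gcongr
      exact abs_sub_le_of_nonneg_of_le hx.1 hx.2 hy.1 hy.2
    _ = |k - r| := mul_one _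

theorem dotProduct_sub_le_sum_abs_of_isMaxOn (s : Finset α) {γ : ℝ} {K R X₀ Xhat : α → ℝ}
    (hR : ∀ a ∉ s, R a = γ) (hX₀ : X₀ ∈ Set.Icc 0 1) (hXhat : Xhat ∈ Set.Icc 0 1)
    (hmax : IsMaxOn ((fun a => K a - γ) ⬝ᵥ ·) (Set.Icc 0 1) Xhat) :
    (fun a => R a - γ) ⬝ᵥ (X₀ - Xhat) ≤ ∑ a ∈ s, |K a - R a| := by
  classical
  have hsplit : (fun a => R a - γ) ⬝ᵥ (X₀ - Xhat) =
      ∑ a ∈ s, (R a - K a) * (X₀ a - Xhat a) + ∑ a ∈ s, (K a - γ) * (X₀ a - Xhat a) := by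
    rw [dotProduct_eq_sum_of_mul_eq_zero (s := s) fun a ha => by simp [hR a ha], ← sum_add_distrib]
    exact sum_congr rfl fun a _ => by simp only [Pi.sub_apply]; ring
  have hmisfit : ∑ a ∈ s, (R a - K a) * (X₀ a - Xhat a) ≤ ∑ a ∈ s, |K a - R a| :=
    sum_le_sum fun a _ => mul_sub_le_abs_sub ⟨hX₀.1 a, hX₀.2 a⟩ ⟨hXhat.1 a, hXhat.2 a⟩
  have hopt := sum_mul_sub_nonpos_of_isMaxOn s hmax hX₀ hXhat
  linarith

end Box

theorem stmt_2_general (N : ℕ) (inlier : Fin N → Prop) [DecidablePred inlier]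
    (K R X0 Xhat : Matrix (Fin N) (Fin N) ℝ) (γ : ℝ)
    (hRout : ∀ i j, (¬ inlier i ∨ ¬ inlier j) → R i j = γ)
    (hX0bd : ∀ i j, 0 ≤ X0 i j ∧ X0 i j ≤ 1)
    (hXhatbd : ∀ i j, 0 ≤ Xhat i j ∧ Xhat i j ≤ 1)
    (hXhatmax : ∀ X : Matrix (Fin N) (Fin N) ℝ, (∀ i j, 0 ≤ X i j ∧ X i j ≤ 1) →
      ∑ i, ∑ j, (K i j - γ) * X i j ≤ ∑ i, ∑ j, (K i j - γ) * Xhat i j) :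
    ∑ i, ∑ j, (R i j - γ) * (X0 i j - Xhat i j) ≤
      2 * ∑ i, ∑ j, (if inlier i ∧ inlier j then |K i j - R i j| else 0) := by
  let s : Finset (Fin N × Fin N) := {p | inlier p.1 ∧ inlier p.2}
  have hmax : IsMaxOn ((fun p : Fin N × Fin N => K p.1 p.2 - γ) ⬝ᵥ ·) (Set.Icc 0 1)
      (fun p => Xhat p.1 p.2) := isMaxOn_iff.2 fun X hX => by
    simp only [dotProduct, Fintype.sum_prod_type]
    exact hXhatmax (fun i j => X (i, j)) fun i j => ⟨hX.1 (i, j), hX.2 (i, j)⟩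
  have key := dotProduct_sub_le_sum_abs_of_isMaxOn s
    (fun p hp => hRout p.1 p.2 (not_and_or.1 (by simpa [s] using hp)))
    ⟨fun p => (hX0bd p.1 p.2).1, fun p => (hX0bd p.1 p.2).2⟩
    ⟨fun p => (hXhatbd p.1 p.2).1, fun p => (hXhatbd p.1 p.2).2⟩ hmax
  have hl1 : ∑ i, ∑ j, (if inlier i ∧ inlier j then |K i j - R i j| else 0) =
      ∑ p ∈ s, |K p.1 p.2 - R p.1 p.2| := by
    rw [sum_filter, Fintype.sum_prod_type]
  simp only [dotProduct, Fintype.sum_prod_type, Pi.sub_apply] at key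
  have hnonneg : 0 ≤ ∑ p ∈ s, |K p.1 p.2 - R p.1 p.2| := by positivity
  rw [hl1]
  linarith

/-- the reference-objective gap is bounded by twice the ℓ₁ distance
between the kernel and reference matrices on the inlier block. -/
theorem stmt_2 (N : ℕ) (inlier : Fin N → Prop) [DecidablePred inlier]
    (K R X0 Xhat : Matrix (Fin N) (Fin N) ℝ) (γ : ℝ)
    (hKbd : ∀ i j, 0 ≤ K i j ∧ K i j ≤ 1)
    (hRbd : ∀ i j, 0 ≤ R i j ∧ R i j ≤ 1)
    (hRout : ∀ i j, (¬ inlier i ∨ ¬ inlier j) → R i j = γ)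
    (hX0bd : ∀ i j, 0 ≤ X0 i j ∧ X0 i j ≤ 1)
    (hX0out : ∀ i j, (¬ inlier i ∨ ¬ inlier j) → X0 i j = 0)
    (hXhatbd : ∀ i j, 0 ≤ Xhat i j ∧ Xhat i j ≤ 1)
    (hXhatmax : ∀ X : Matrix (Fin N) (Fin N) ℝ, (∀ i j, 0 ≤ X i j ∧ X i j ≤ 1) →
      ∑ i, ∑ j, (K i j - γ) * X i j ≤ ∑ i, ∑ j, (K i j - γ) * Xhat i j) :
    ∑ i, ∑ j, (R i j - γ) * (X0 i j - Xhat i j) ≤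
      2 * ∑ i, ∑ j, (if inlier i ∧ inlier j then |K i j - R i j| else 0) :=
  stmt_2_general N inlier K R X0 Xhat γ hRout hX0bd hXhatbd hXhatmax
end

section
/- If X ∈ {0,1}^{N×N} is positive semidefinite with rank(X) ≤ r, then there exists G ∈ ℝ^{N×r} with X = GGᵀ such that every row of G is either the zero vector or a unit vector, and any two distinct nonzero rows of G are either equal or orthogonal. -/
/-!
For a positive semidefinite matrix, `xᴴ X x = 0` forces `X x = 0`. Taking `x = eᵢ` shows that a
zero diagonal entry kills its row, and taking `x = eᵢ - eⱼ` shows that `X i j = 1` makes rows `i`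
and `j` equal. Hence a 0/1 PSD matrix has `X i j = 1` exactly when rows `i` and `j` are the same
nonzero row, and its distinct nonzero rows are linearly independent (row `i` is the only one with
a `1` in column `i`), so there are at most `rank X ≤ r` of them. Labelling them by distinct columns
`k < r` and letting row `i` of `G` be the basis vector of the label of row `i` of `X` (or zero)
gives `X = G Gᵀ`.
-/

open Finset Matrix

theorem linearIndepOn_id_of_forall_exists_apply_eq_one {R n : Type*} [Semiring R]
    {s : Set (n → R)} (h : ∀ v ∈ s, ∃ k, v k = 1 ∧ ∀ w ∈ s, w ≠ v → w k = 0) :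
    LinearIndepOn R id s := by
  classical
  choose c hc_one hc_zero using h
  refine LinearIndependent.of_comp (LinearMap.funLeft R R fun w : s => c w w.2) ?_
  convert Pi.linearIndependent_single_one s R with v
  ext w
  by_cases hvw : w = v
  · simp [hvw, hc_one]
  · simp [hvw, hc_zero w w.2 v v.2 (Subtype.coe_injective.ne (Ne.symm hvw))]

theorem Finset.exists_injOn_option {α ι : Type*} [DecidableEq α] [Fintype ι] (s : Finset α)
    (a : α) (h : (s.erase a).card ≤ Fintype.card ι) :
    ∃ φ : α → Option ι, Set.InjOn φ s ∧ ∀ v ∈ s, φ v = none ↔ v = a := by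
  obtain ⟨e⟩ : Nonempty (s.erase a ↪ ι) :=
    Function.Embedding.nonempty_of_card_le (by simpa using h)
  refine ⟨fun v => if hv : v ∈ s.erase a then some (e ⟨v, hv⟩) else none, ?_, fun v hv => ?_⟩
  · intro v hv w hw hvw
    by_cases hva : v = a <;> by_cases hwa : w = a <;> simp_all
  · simp [hv]

section LabelMatrix

variable {n ι : Type*} (R : Type*) [Fintype ι] [DecidableEq ι] [Semiring R]

def labelMatrix (c : n → Option ι) : Matrix n ι R :=
  of fun i k => if c i = some k then 1 else 0

theorem sum_labelMatrix_mul_labelMatrix (c : n → Option ι) (i j : n) :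
    ∑ k, labelMatrix R c i k * labelMatrix R c j k = if c i ≠ none ∧ c i = c j then 1 else 0 := by
  cases hi : c i with
  | none => simp [labelMatrix, hi]
  | some a =>
    rw [Finset.sum_eq_single a (fun k _ hka => by simp [labelMatrix, hi, Ne.symm hka]) (by simp)]
    simp [labelMatrix, hi, eq_comm]

theorem labelMatrix_mul_transpose_apply (c : n → Option ι) (i j : n) :
    (labelMatrix R c * (labelMatrix R c)ᵀ) i j = if c i ≠ none ∧ c i = c j then 1 else 0 := by
  simp only [mul_apply, transpose_apply, sum_labelMatrix_mul_labelMatrix]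

theorem labelMatrix_row_eq_zero_or_sum_sq_eq_one (c : n → Option ι) (i : n) :
    (∀ k, labelMatrix R c i k = 0) ∨ ∑ k, labelMatrix R c i k ^ 2 = 1 := by
  cases hi : c i with
  | none => simp [labelMatrix, hi]
  | some a =>
    right
    simp_rw [sq, sum_labelMatrix_mul_labelMatrix, hi]
    simp

theorem labelMatrix_rows_eq_or_sum_mul_eq_zero (c : n → Option ι) (i j : n) :
    (∀ k, labelMatrix R c i k = labelMatrix R c j k) ∨
      ∑ k, labelMatrix R c i k * labelMatrix R c j k = 0 := by
  by_cases hij : c i = c j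
  · simp [labelMatrix, hij]
  · simp [sum_labelMatrix_mul_labelMatrix, hij]

end LabelMatrix

namespace Matrix.PosSemidef

section RCLike

open scoped ComplexOrder

variable {𝕜 n : Type*} [RCLike 𝕜] [Fintype n] [DecidableEq n] {A : Matrix n n 𝕜}

theorem row_eq_zero_of_apply_self_eq_zero (hA : A.PosSemidef) {i : n} (hi : A i i = 0) :
    A i = 0 := by
  have hcol : A *ᵥ Pi.single i 1 = 0 :=
    (hA.dotProduct_mulVec_zero_iff _).1 (by simp [hi])
  ext k
  simpa [← hA.isHermitian.apply i k] using congrFun hcol k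

theorem row_eq_row_of_apply_self_add_apply_self (hA : A.PosSemidef) {i j : n}
    (h : A i i + A j j = A i j + A j i) : A i = A j := by
  have hcol : A *ᵥ (Pi.single i 1 - Pi.single j 1) = 0 := by
    refine (hA.dotProduct_mulVec_zero_iff _).1 ?_
    simp [mulVec_sub, dotProduct_sub, sub_dotProduct]
    linear_combination h
  ext k
  have hk := congrFun hcol k
  simp only [mulVec_sub, mulVec_single_one, Pi.sub_apply, col_apply, Pi.zero_apply] at hk
  rw [← hA.isHermitian.apply, ← hA.isHermitian.apply j, sub_eq_zero.1 hk]

end RCLike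

section ZeroOne

variable {n : Type*} [Fintype n] [DecidableEq n] {X : Matrix n n ℝ}
  (hX : X.PosSemidef) (hbin : ∀ i j, X i j = 0 ∨ X i j = 1)
include hX hbin

theorem apply_self_eq_one_of_row_ne_zero {i : n} (hi : X i ≠ 0) : X i i = 1 :=
  (hbin i i).resolve_left fun h => hi (hX.row_eq_zero_of_apply_self_eq_zero h)

theorem apply_eq_one_iff {i j : n} : X i j = 1 ↔ X i ≠ 0 ∧ X i = X j := by
  have hsymm := (isHermitian_iff_isSymm.1 hX.isHermitian).apply
  constructor
  · intro h
    have hi : X i ≠ 0 := fun hi => by simp [hi] at h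
    have hj : X j ≠ 0 := fun hj => by rw [← hsymm] at h; simp [hj] at h
    refine ⟨hi, hX.row_eq_row_of_apply_self_add_apply_self ?_⟩
    rw [hX.apply_self_eq_one_of_row_ne_zero hbin hi, hX.apply_self_eq_one_of_row_ne_zero hbin hj,
      hsymm i j, h]
  · rintro ⟨hi, hij⟩
    rw [← hsymm, ← hij]
    exact hX.apply_self_eq_one_of_row_ne_zero hbin hi

theorem apply_eq_ite (i j : n) : X i j = if X i ≠ 0 ∧ X i = X j then 1 else 0 := by
  split_ifs with h
  · exact (hX.apply_eq_one_iff hbin).2 h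
  · exact (hbin i j).resolve_right (mt (hX.apply_eq_one_iff hbin).1 h)

theorem linearIndepOn_nonzero_rows :
    LinearIndepOn ℝ id (((univ.image X).erase 0 : Finset (n → ℝ)) : Set (n → ℝ)) := by
  refine linearIndepOn_id_of_forall_exists_apply_eq_one fun v hv => ?_
  obtain ⟨hv0, hv⟩ := mem_erase.1 hv
  obtain ⟨i, -, rfl⟩ := mem_image.1 hv
  refine ⟨i, hX.apply_self_eq_one_of_row_ne_zero hbin hv0, fun w hw hwi => ?_⟩
  obtain ⟨j, -, rfl⟩ := mem_image.1 (mem_of_mem_erase hw)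
  rw [hX.apply_eq_ite hbin, if_neg fun h => hwi h.2]

theorem card_nonzero_rows_le_rank : ((univ.image X).erase 0).card ≤ X.rank := by
  rw [rank_eq_finrank_span_row, ← finrank_span_finset_eq_card (hX.linearIndepOn_nonzero_rows hbin)]
  refine Submodule.finrank_mono (Submodule.span_mono fun v hv => ?_)
  obtain ⟨i, -, rfl⟩ := mem_image.1 (mem_of_mem_erase hv)
  exact ⟨i, rfl⟩

end ZeroOne

end Matrix.PosSemidef

/-- a 0-1 PSD matrix of rank at most r factors as G·Gᵀ where every
row of G is zero or a unit vector, and distinct nonzero rows are equal or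
orthogonal. -/
theorem stmt_3 (N r : ℕ) (X : Matrix (Fin N) (Fin N) ℝ)
    (hbin : ∀ i j, X i j = 0 ∨ X i j = 1)
    (hpsd : X.PosSemidef) (hrank : X.rank ≤ r) :
    ∃ G : Matrix (Fin N) (Fin r) ℝ,
      X = G * G.transpose ∧
      (∀ i, (∀ k, G i k = 0) ∨ ∑ k, G i k ^ 2 = 1) ∧
      (∀ i j, i ≠ j → (∀ k, G i k = G j k) ∨ ∑ k, G i k * G j k = 0) := by
  obtain ⟨φ, hφ_inj, hφ_none⟩ := (univ.image X).exists_injOn_option (ι := Fin r) 0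
    (by simpa using (hpsd.card_nonzero_rows_le_rank hbin).trans hrank)
  have hrow : ∀ i, X i ∈ univ.image X := fun i => mem_image_of_mem X (mem_univ i)
  have hlabel : ∀ i j, φ (X i) ≠ none ∧ φ (X i) = φ (X j) ↔ X i ≠ 0 ∧ X i = X j := fun i j => by
    rw [Ne, hφ_none _ (hrow i), hφ_inj.eq_iff (hrow i) (hrow j)]
  refine ⟨labelMatrix ℝ (φ ∘ X), ?_, labelMatrix_row_eq_zero_or_sum_sq_eq_one ℝ _,
    fun i j _ => labelMatrix_rows_eq_or_sum_mul_eq_zero ℝ _ i j⟩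
  ext i j
  rw [labelMatrix_mul_transpose_apply, hpsd.apply_eq_ite hbin]
  exact if_congr (hlabel i j).symm rfl rfl
end

section
/- If X ∈ {0,1}^{N×N} is positive semidefinite with rank(X) ≤ r, then there exists a matrix Z ∈ {0,1}^{N×r} with each row summing to 0 or 1 (a partial assignment matrix) such that X = ZZᵀ. -/
/-!
Testing the quadratic form of a 0-1 positive semidefinite matrix `X` on `(1, -1)` shows that
`X i j = 1` forces `X i i = X j j = 1`, and on `(1, -1, 1)` that `X i j = X j k = 1` forces
`X i k = 1`. Hence `X i j = 1` is an equivalence relation on `{i | X i i = 1}` and `X` is the sum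
of the all-ones blocks of its classes. The rows and columns of one representative per class
form an identity principal submatrix, so there are at most `rank X ≤ r` classes, and sending each
class to its own column gives `Z`.
-/

namespace Matrix

section PartialAssignment

variable {ι κ R : Type*} [DecidableEq κ] [NonAssocSemiring R]

def partialAssignment (c : ι → Option κ) : Matrix ι κ R :=
  of fun i k => if c i = some k then 1 else 0

variable (c : ι → Option κ)

theorem partialAssignment_apply_eq_zero_or_eq_one (i : ι) (k : κ) :
    partialAssignment (R := R) c i k = 0 ∨ partialAssignment (R := R) c i k = 1 := by
  by_cases h : c i = some k <;> simp [partialAssignment, h]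

theorem sum_partialAssignment_eq_zero_or_eq_one [Fintype κ] (i : ι) :
    ∑ k, partialAssignment (R := R) c i k = 0 ∨ ∑ k, partialAssignment (R := R) c i k = 1 := by
  cases h : c i <;> simp [partialAssignment, h]

theorem partialAssignment_mul_transpose_apply [Fintype κ] (i j : ι) :
    (partialAssignment (R := R) c * (partialAssignment (R := R) c)ᵀ) i j =
      if c i ≠ none ∧ c i = c j then 1 else 0 := by
  rw [mul_apply]
  simp only [partialAssignment, transpose_apply, of_apply]
  cases c i with
  | none => simp
  | some k =>
    simp only [Option.some_inj, boole_mul, Finset.sum_ite_eq, Finset.mem_univ, if_true]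
    simp [eq_comm]

end PartialAssignment

section ZeroOneSemidef

variable {n : Type*} {X : Matrix n n ℝ}

theorem PosSemidef.apply_symm (hX : X.PosSemidef) (i j : n) : X j i = X i j := by
  simpa using hX.isHermitian.apply i j

theorem PosSemidef.two_mul_apply_le (hX : X.PosSemidef) (i j : n) :
    2 * X i j ≤ X i i + X j j := by
  have h := (hX.submatrix ![i, j]).dotProduct_mulVec_nonneg ![1, -1]
  simp only [dotProduct, mulVec, submatrix_apply, Fin.sum_univ_two, Pi.star_apply, star_trivial,
    cons_val_zero, cons_val_one, cons_val_fin_one] at h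
  linarith [hX.apply_symm i j]

theorem PosSemidef.two_mul_add_apply_le (hX : X.PosSemidef) (i j k : n) :
    2 * (X i j + X j k) ≤ X i i + X j j + X k k + 2 * X i k := by
  have h := (hX.submatrix ![i, j, k]).dotProduct_mulVec_nonneg ![1, -1, 1]
  simp only [dotProduct, mulVec, submatrix_apply, Fin.sum_univ_three, Pi.star_apply, star_trivial,
    cons_val_zero, cons_val_one, cons_val] at h
  linarith [hX.apply_symm i j, hX.apply_symm j k, hX.apply_symm i k]

theorem PosSemidef.diag_eq_one_of_apply_eq_one (hbin : ∀ i j, X i j = 0 ∨ X i j = 1)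
    (hX : X.PosSemidef) {i j : n} (h : X i j = 1) : X i i = 1 := by
  rcases hbin i i with hi | hi
  · have := hX.two_mul_apply_le i j
    rcases hbin j j with hj | hj <;> linarith
  · exact hi

theorem PosSemidef.apply_eq_one_trans (hbin : ∀ i j, X i j = 0 ∨ X i j = 1)
    (hX : X.PosSemidef) {i j k : n} (hij : X i j = 1) (hjk : X j k = 1) : X i k = 1 := by
  have hii := hX.diag_eq_one_of_apply_eq_one hbin hij
  have hjj := hX.diag_eq_one_of_apply_eq_one hbin hjk
  have hkk := hX.diag_eq_one_of_apply_eq_one hbin ((hX.apply_symm j k).trans hjk)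
  have := hX.two_mul_add_apply_le i j k
  rcases hbin i k with h | h
  · linarith
  · exact h

def PosSemidef.blockSetoid (hbin : ∀ i j, X i j = 0 ∨ X i j = 1) (hX : X.PosSemidef) :
    Setoid {i // X i i = 1} where
  r a b := X a b = 1
  iseqv :=
    ⟨fun a => a.2, fun h => (hX.apply_symm _ _).trans h, hX.apply_eq_one_trans hbin⟩

open Classical in
noncomputable def PosSemidef.blockOf (hbin : ∀ i j, X i j = 0 ∨ X i j = 1) (hX : X.PosSemidef)
    (i : n) : Option (Quotient (hX.blockSetoid hbin)) :=
  if h : X i i = 1 then some ⟦⟨i, h⟩⟧ else none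

theorem PosSemidef.apply_eq_one_iff_blockOf (hbin : ∀ i j, X i j = 0 ∨ X i j = 1)
    (hX : X.PosSemidef) (i j : n) :
    X i j = 1 ↔ hX.blockOf hbin i ≠ none ∧ hX.blockOf hbin i = hX.blockOf hbin j := by
  by_cases hi : X i i = 1
  · by_cases hj : X j j = 1
    · simp only [blockOf, hi, hj, dite_true, ne_eq, reduceCtorEq, not_false_eq_true,
        Option.some_inj, Quotient.eq, true_and]
      rfl
    · have : ¬X i j = 1 := fun h => hj (hX.diag_eq_one_of_apply_eq_one hbin
        ((hX.apply_symm i j).trans h))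
      simp [blockOf, hi, hj, this]
  · have : ¬X i j = 1 := fun h => hi (hX.diag_eq_one_of_apply_eq_one hbin h)
    simp [blockOf, hi, this]

end ZeroOneSemidef

theorem card_le_rank_of_submatrix_eq_one {m n m₀ R : Type*} [Fintype n] [Fintype m₀]
    [DecidableEq m₀] [CommSemiring R] [StrongRankCondition R] (A : Matrix m n R)
    {f : m₀ → m} {g : m₀ → n} (h : A.submatrix f g = 1) : Fintype.card m₀ ≤ A.rank := by
  rw [← rank_one (R := R), ← h]
  exact rank_submatrix_le A f g

theorem PosSemidef.card_blocks_le_rank {n : Type*} [Fintype n] {X : Matrix n n ℝ}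
    (hbin : ∀ i j, X i j = 0 ∨ X i j = 1) (hX : X.PosSemidef) :
    Nat.card (Quotient (hX.blockSetoid hbin)) ≤ X.rank := by
  classical
  rw [Nat.card_eq_fintype_card]
  refine card_le_rank_of_submatrix_eq_one X (f := fun q => q.out.1) (g := fun q => q.out.1) ?_
  ext p q
  have hout : X p.out q.out = 1 ↔ p = q := Quotient.out_equiv_out (x := p) (y := q)
  rw [submatrix_apply, one_apply]
  split_ifs with hpq
  · exact hout.2 hpq
  · exact (hbin _ _).resolve_right (mt hout.1 hpq)

end Matrix

/-- a 0-1 PSD matrix of rank at most r equals Z·Zᵀ for a partial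
assignment matrix Z (binary with each row summing to 0 or 1). -/
theorem stmt_4 (N r : ℕ) (X : Matrix (Fin N) (Fin N) ℝ)
    (hbin : ∀ i j, X i j = 0 ∨ X i j = 1)
    (hpsd : X.PosSemidef) (hrank : X.rank ≤ r) :
    ∃ Z : Matrix (Fin N) (Fin r) ℝ,
      (∀ i k, Z i k = 0 ∨ Z i k = 1) ∧
      (∀ i, (∑ k, Z i k = 0) ∨ (∑ k, Z i k = 1)) ∧
      X = Z * Z.transpose := by
  classical
  obtain ⟨e⟩ : Nonempty (Quotient (hpsd.blockSetoid hbin) ↪ Fin r) :=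
    Function.Embedding.nonempty_of_card_le <| by
      simpa [Nat.card_eq_fintype_card] using (hpsd.card_blocks_le_rank hbin).trans hrank
  set c : Fin N → Option (Fin r) := fun i => (hpsd.blockOf hbin i).map e
  refine ⟨Matrix.partialAssignment c, Matrix.partialAssignment_apply_eq_zero_or_eq_one c,
    Matrix.sum_partialAssignment_eq_zero_or_eq_one c, ?_⟩
  ext i j
  have hblock : X i j = 1 ↔ c i ≠ none ∧ c i = c j := by
    simp only [c, hpsd.apply_eq_one_iff_blockOf hbin, ne_eq, Option.map_eq_none_iff,
      (Option.map_injective e.injective).eq_iff]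
  rw [Matrix.partialAssignment_mul_transpose_apply]
  split_ifs with hc
  · exact hblock.2 hc
  · exact (hbin i j).resolve_right (mt hblock.1 hc)
end
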